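/- Define the sequence of ordinals γ : ℕ → Ordinal by γ(0) = 0 and γ(n+1) = φ_{γ(n)}(0), and let Γ₀ = sup over n of γ(n). Then φ_{Γ₀}(0) = Γ₀, and Γ₀ is the least ordinal with this property: for every ordinal x with φ_x(0) = x one has Γ₀ ≤ x. -/

import Mathlib

noncomputable def veblen (o : Ordinal.{0}) : Ordinal.{0} → Ordinal.{0} :=
  if o = 0 then fun b => Ordinal.omega0 ^ b
  else Ordinal.derivFamily fun x : Set.Iio o => veblen x.1
termination_by o
decreasing_by exact x.2

/-- γ 0 = 0 and γ (n+1) = φ_{γ n}(0). -/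
noncomputable def gammaSeq : ℕ → Ordinal.{0}
  | 0 => 0
  | n + 1 => veblen (gammaSeq n) 0

/-- The Feferman–Schütte ordinal Γ₀ = sup_n γ_n. -/
noncomputable def Gamma0 : Ordinal.{0} := ⨆ n : ℕ, gammaSeq n

/-!
`veblen` unfolds exactly like Mathlib's `Ordinal.veblen`, so the two agree by well-founded
induction. Then `gammaSeq n` is the `n`-th iterate of `a ↦ φ_a(0)` at `0`, whose supremum is the
least fixed point `nfp (veblen · 0) 0`, i.e. Mathlib's Feferman–Schütte ordinal `Γ₀ = gamma 0`.
-/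

open Ordinal hiding veblen

theorem veblen_eq_ordinal_veblen : veblen = Ordinal.veblen := by
  funext o
  induction o using WellFoundedLT.induction with
  | ind o ih =>
    rw [veblen]
    split_ifs with ho
    · rw [ho, Ordinal.veblen_zero]
    · rw [Ordinal.veblen_of_ne_zero ho]
      congr with x : 1
      exact ih x.1 x.2

theorem gammaSeq_eq_iterate (n : ℕ) :
    gammaSeq n = (fun a ↦ Ordinal.veblen a 0)^[n] 0 := by
  induction n with
  | zero => rfl
  | succ n ih => rw [Function.iterate_succ_apply', ← ih, gammaSeq, veblen_eq_ordinal_veblen]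

theorem Gamma0_eq_gamma_zero : Gamma0 = Γ₀ := by
  simp only [Gamma0, gammaSeq_eq_iterate, iSup_iterate_eq_nfp, gamma_zero_eq_nfp]

theorem veblen_gamma0_fixed_and_least :
    veblen Gamma0 0 = Gamma0 ∧ ∀ x : Ordinal, veblen x 0 = x → Gamma0 ≤ x := by
  rw [veblen_eq_ordinal_veblen, Gamma0_eq_gamma_zero]
  exact ⟨veblen_gamma_zero 0, fun x hx ↦ gamma_zero_le_of_veblen_le hx.le⟩
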